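/- The parking reflection Φ_{m,n} is an involution on the set PF(m,n) of classical (m,n)-parking functions, and it preserves the traverse path length of each car: for every f ∈ PF(m,n) and every car c, the number of spots car c traverses before parking in Φ_{m,n}(f) equals the number it traverses in f. -/

import Mathlib

/-!
Parking components are intervals `[L, R]` of the street `[1, n]`, so the map `ρ` that
moves each of them by a translation onto its mirror image `[n + 1 - R, n + 1 - L]` is a
bijection of the street. It is injective and translates every traverse path, so when the
cars park with preferences `ρ ∘ f` each car finds, at every step, the reflected copy of
the occupied spots it met under `f`: it parks at the reflection of its old spot. Hence `Φ(f)`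
is a parking function with the same traverse lengths, its components are the mirrored ones,
and mirroring twice is the identity.
-/

/-- Sequentially assign to each car (with the given preference list) the first
unoccupied spot `≥` its preference within `[1,n]`, recording `0` on failure. -/
def spotsAux (n : ℕ) : List ℕ → Finset ℕ → List ℕ
  | [], _ => []
  | p :: rest, occ =>
    let s := ((List.range' p (n + 1 - p)).find? (fun x => decide (x ∉ occ))).getD 0
    s :: spotsAux n rest (insert s occ)

/-- The spot where car `c` parks (or `0` if it fails to park). -/
def spotOf (n : ℕ) {m : ℕ} (a : Fin m → ℕ) (c : Fin m) : ℕ :=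
  (spotsAux n (List.ofFn a) ∅).getD c 0

/-- `a` is a classical `(m,n)`-parking function: all preferences lie in `[1,n]`
and every car succeeds in parking. -/
def IsPF (m n : ℕ) (a : Fin m → ℕ) : Prop :=
  (∀ c, 1 ≤ a c ∧ a c ≤ n) ∧ ∀ c, spotOf n a c ≠ 0

/-- Two vertices are related when some car's traverse path (the interval from
its preference to its parking spot) contains both. -/
def tpathStep (n : ℕ) {m : ℕ} (a : Fin m → ℕ) (u v : ℕ) : Prop :=
  ∃ c : Fin m, u ∈ Finset.Icc (a c) (spotOf n a c) ∧ v ∈ Finset.Icc (a c) (spotOf n a c)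

/-- The parking component of vertex `v`: all vertices connected to `v` by a
chain of pairwise-overlapping traverse paths. -/
def component (n : ℕ) {m : ℕ} (a : Fin m → ℕ) (v : ℕ) : Set ℕ :=
  {u | Relation.EqvGen (tpathStep n a) u v}

/-- The left endpoint of the parking component of `v`. -/
noncomputable def compLeft (n : ℕ) {m : ℕ} (a : Fin m → ℕ) (v : ℕ) : ℕ :=
  sInf (component n a v)

/-- The right endpoint of the parking component of `v`. -/
noncomputable def compRight (n : ℕ) {m : ℕ} (a : Fin m → ℕ) (v : ℕ) : ℕ :=
  sSup (component n a v)

/-- The parking reflection `Φ_{m,n}`: the parking component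
`(i, …, i+j)` of a preferred vertex is reflected about the center of the street
to `(n-i-j+1, …, n-i+1)`, a preference `i+a'` becoming `n-i-j+a'+1`. -/
noncomputable def Phi (m n : ℕ) (a : Fin m → ℕ) : Fin m → ℕ :=
  fun c => n + 1 - compRight n a (a c) + (a c - compLeft n a (a c))

def parkStep (n p : ℕ) (occ : Finset ℕ) : ℕ :=
  ((List.range' p (n + 1 - p)).find? (fun x => decide (x ∉ occ))).getD 0

theorem spotsAux_cons (n p : ℕ) (rest : List ℕ) (occ : Finset ℕ) :
    spotsAux n (p :: rest) occ =
      parkStep n p occ :: spotsAux n rest (insert (parkStep n p occ) occ) :=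
  rfl

theorem parkStep_eq_iff {n p s : ℕ} {occ : Finset ℕ} (hs : s ≠ 0) :
    parkStep n p occ = s ↔ p ≤ s ∧ s ≤ n ∧ s ∉ occ ∧ ∀ q, p ≤ q → q < s → q ∈ occ := by
  have : parkStep n p occ = s ↔
      (List.range' p (n + 1 - p)).find? (fun x => decide (x ∉ occ)) = some s := by
    unfold parkStep
    cases (List.range' p (n + 1 - p)).find? (fun x => decide (x ∉ occ)) <;> simp [eq_comm, hs]
  rw [this, List.find?_range'_eq_some, List.mem_range'_1]
  simp only [decide_eq_true_eq, Bool.not_eq_true', decide_eq_false_iff_not, not_not]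
  constructor
  · rintro ⟨h1, h2, h3⟩; exact ⟨h2.1, by omega, h1, h3⟩
  · rintro ⟨h1, h2, h3, h4⟩; exact ⟨h3, ⟨h1, by omega⟩, h4⟩

theorem parkStep_mem_Icc {n p : ℕ} {occ : Finset ℕ} (h : parkStep n p occ ≠ 0) :
    parkStep n p occ ∈ Set.Icc p n :=
  have := (parkStep_eq_iff h).1 rfl
  ⟨this.1, this.2.1⟩

theorem length_spotsAux (n : ℕ) (l : List ℕ) (occ : Finset ℕ) :
    (spotsAux n l occ).length = l.length := by
  induction l generalizing occ with
  | nil => rfl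
  | cons p rest ih => simp [spotsAux_cons, ih]

theorem forall₂_spotsAux {n : ℕ} {P : ℕ → ℕ → Prop} (hP : ∀ p occ, P p (parkStep n p occ))
    (l : List ℕ) (occ : Finset ℕ) : List.Forall₂ P l (spotsAux n l occ) := by
  induction l generalizing occ with
  | nil => exact .nil
  | cons p rest ih => exact .cons (hP p occ) (ih _)

theorem spotOf_eq_getElem {n m : ℕ} (a : Fin m → ℕ) (c : Fin m) :
    spotOf n a c = (spotsAux n (List.ofFn a) ∅)[(c : ℕ)]'(by simp [length_spotsAux]) :=
  List.getD_eq_getElem _ _ _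

theorem forall₂_ofFn_spotsAux_iff {n m : ℕ} {a : Fin m → ℕ} {P : ℕ → ℕ → Prop} :
    List.Forall₂ P (List.ofFn a) (spotsAux n (List.ofFn a) ∅) ↔ ∀ c, P (a c) (spotOf n a c) := by
  simp only [List.forall₂_iff_get, length_spotsAux, List.length_ofFn, true_and,
    List.get_eq_getElem, List.getElem_ofFn, spotOf_eq_getElem]
  exact ⟨fun h c => h c c.isLt c.isLt, fun h i hi _ => h ⟨i, hi⟩⟩

theorem spotOf_mem_Icc {n m : ℕ} {a : Fin m → ℕ} {c : Fin m} (h : spotOf n a c ≠ 0) :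
    spotOf n a c ∈ Set.Icc (a c) n :=
  forall₂_ofFn_spotsAux_iff.1
    (forall₂_spotsAux (P := fun p s => s ≠ 0 → s ∈ Set.Icc p n)
      (fun _ _ => parkStep_mem_Icc) _ _) c h

section Map

variable {n : ℕ} {f : ℕ → ℕ}

theorem parkStep_map (hinj : Set.InjOn f (Set.Icc 1 n))
    (hmaps : Set.MapsTo f (Set.Icc 1 n) (Set.Icc 1 n)) {p : ℕ} {occ : Finset ℕ}
    (hocc : ↑occ ⊆ Set.Icc 1 n) (hs : parkStep n p occ ≠ 0)
    (htrans : ∀ q ∈ Set.Icc p (parkStep n p occ), f q = f p + (q - p)) :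
    parkStep n (f p) (occ.image f) = f (parkStep n p occ) := by
  set s := parkStep n p occ
  obtain ⟨hps, hsn, hs_free, hbefore⟩ := (parkStep_eq_iff hs).1 rfl
  have hs_mem : s ∈ Set.Icc 1 n := ⟨Nat.one_le_iff_ne_zero.2 hs, hsn⟩
  have hfs := hmaps hs_mem
  have hfs_eq := htrans s ⟨hps, le_rfl⟩
  rw [parkStep_eq_iff (by have := hfs.1; omega)]
  refine ⟨by omega, hfs.2, ?_, fun q' h1 h2 => ?_⟩
  · rintro hmem
    obtain ⟨q, hq, hfq⟩ := Finset.mem_image.1 hmem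
    exact hs_free (hinj (hocc hq) hs_mem hfq ▸ hq)
  · refine Finset.mem_image.2 ⟨p + (q' - f p), hbefore _ (by omega) (by omega), ?_⟩
    rw [htrans _ ⟨by omega, by omega⟩]
    omega

/-- Parking commutes with any injective self-map of the street that translates every
traverse path. -/
theorem spotsAux_map (hinj : Set.InjOn f (Set.Icc 1 n))
    (hmaps : Set.MapsTo f (Set.Icc 1 n) (Set.Icc 1 n)) {l : List ℕ} {occ : Finset ℕ}
    (hocc : ↑occ ⊆ Set.Icc 1 n)
    (hl : List.Forall₂ (fun p s => s ≠ 0 ∧ ∀ q ∈ Set.Icc p s, f q = f p + (q - p))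
      l (spotsAux n l occ)) :
    spotsAux n (l.map f) (occ.image f) = (spotsAux n l occ).map f := by
  induction l generalizing occ with
  | nil => rfl
  | cons p rest ih =>
    rw [spotsAux_cons] at hl ⊢
    obtain ⟨⟨hs, htrans⟩, hrest⟩ := List.forall₂_cons.1 hl
    have hs_mem : parkStep n p occ ∈ Set.Icc 1 n :=
      ⟨Nat.one_le_iff_ne_zero.2 hs, (parkStep_mem_Icc hs).2⟩
    rw [List.map_cons, spotsAux_cons, parkStep_map hinj hmaps hocc hs htrans, List.map_cons,
      ← Finset.image_insert, ih (by simpa [Set.insert_subset_iff] using ⟨hs_mem, hocc⟩) hrest]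

end Map

theorem Relation.EqvGen.map {α β : Type*} {r : α → α → Prop} {s : β → β → Prop} (f : α → β)
    (hf : ∀ x y, r x y → s (f x) (f y)) {x y : α} (h : Relation.EqvGen r x y) :
    Relation.EqvGen s (f x) (f y) := by
  induction h with
  | rel x y hxy => exact .rel _ _ (hf x y hxy)
  | refl x => exact .refl _
  | symm x y _ ih => exact .symm _ _ ih
  | trans x y z _ _ ih₁ ih₂ => exact .trans _ _ _ ih₁ ih₂

section Component

variable {n m : ℕ} {a : Fin m → ℕ}

theorem mem_component_self (v : ℕ) : v ∈ component n a v := .refl v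

theorem component_eq_of_mem {u v : ℕ} (h : u ∈ component n a v) :
    component n a u = component n a v := by
  ext x
  exact ⟨fun hx => .trans _ _ _ hx h, fun hx => .trans _ _ _ hx (.symm _ _ h)⟩

theorem compLeft_eq_of_mem {u v : ℕ} (h : u ∈ component n a v) :
    compLeft n a u = compLeft n a v := by
  rw [compLeft, component_eq_of_mem h, compLeft]

theorem compRight_eq_of_mem {u v : ℕ} (h : u ∈ component n a v) :
    compRight n a u = compRight n a v := by
  rw [compRight, component_eq_of_mem h, compRight]

theorem mem_component_of_mem_Icc {c : Fin m} {q : ℕ} (hq : q ∈ Set.Icc (a c) (spotOf n a c)) :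
    q ∈ component n a (a c) :=
  .rel _ _ ⟨c, Finset.mem_Icc.2 hq, Finset.mem_Icc.2 ⟨le_rfl, hq.1.trans hq.2⟩⟩

theorem uIcc_subset_of_eqvGen {u w : ℕ} (h : Relation.EqvGen (tpathStep n a) u w) :
    Set.uIcc u w ⊆ {t | Relation.EqvGen (tpathStep n a) t u} := by
  induction h with
  | rel u w huw =>
    obtain ⟨c, hu, hw⟩ := huw
    rw [Finset.mem_Icc] at hu hw
    exact fun t ht =>
      .rel _ _ ⟨c, Finset.mem_Icc.2 (Set.uIcc_subset_Icc hu hw ht), Finset.mem_Icc.2 hu⟩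
  | refl u =>
    rw [Set.uIcc_self, Set.singleton_subset_iff]
    exact .refl u
  | symm u w huw ih =>
    exact fun t ht => .trans _ _ _ (ih (Set.uIcc_comm u w ▸ ht)) huw
  | trans u x w hux _ ih₁ ih₂ =>
    intro t ht
    rcases Set.uIcc_subset_uIcc_union_uIcc ht with ht | ht
    · exact ih₁ ht
    · exact .trans _ _ _ (ih₂ ht) (.symm _ _ hux)

theorem ordConnected_component (v : ℕ) : (component n a v).OrdConnected :=
  (Set.ordConnected_iff_uIcc_subset_left (mem_component_self v)).2 fun _ hu =>
    uIcc_subset_of_eqvGen (Relation.EqvGen.symm _ _ hu)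

theorem component_subset_of_saturated {S : Set ℕ}
    (hS : ∀ c, (Set.Icc (a c) (spotOf n a c) ∩ S).Nonempty → Set.Icc (a c) (spotOf n a c) ⊆ S)
    {v : ℕ} (hv : v ∈ S) : component n a v ⊆ S := by
  suffices h : ∀ u w, Relation.EqvGen (tpathStep n a) u w → (u ∈ S ↔ w ∈ S) from
    fun u hu => (h u v hu).2 hv
  intro u w huw
  induction huw with
  | rel u w huw =>
    obtain ⟨c, hu, hw⟩ := huw
    rw [Finset.mem_Icc] at hu hw
    exact ⟨fun h => hS c ⟨u, hu, h⟩ hw, fun h => hS c ⟨w, hw, h⟩ hu⟩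
  | refl u => exact Iff.rfl
  | symm _ _ _ ih => exact ih.symm
  | trans _ _ _ _ _ ih₁ ih₂ => exact ih₁.trans ih₂

theorem component_subset_Icc (ha : IsPF m n a) {v : ℕ} (hv : v ∈ Set.Icc 1 n) :
    component n a v ⊆ Set.Icc 1 n :=
  component_subset_of_saturated (S := Set.Icc 1 n)
    (fun c _ _ hq => ⟨(ha.1 c).1.trans hq.1, hq.2.trans (spotOf_mem_Icc (ha.2 c)).2⟩) hv

theorem component_eq_Icc (ha : IsPF m n a) {v : ℕ} (hv : v ∈ Set.Icc 1 n) :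
    component n a v = Set.Icc (compLeft n a v) (compRight n a v) :=
  (Set.Nonempty.ordConnected_iff_of_bdd ⟨v, mem_component_self v⟩ (OrderBot.bddBelow _)
    ⟨n, fun _ hu => (component_subset_Icc ha hv hu).2⟩).1 (ordConnected_component v)

theorem compLeft_compRight_bounds (ha : IsPF m n a) {v : ℕ} (hv : v ∈ Set.Icc 1 n) :
    1 ≤ compLeft n a v ∧ compLeft n a v ≤ v ∧ v ≤ compRight n a v ∧ compRight n a v ≤ n := by
  have hv' : v ∈ Set.Icc (compLeft n a v) (compRight n a v) :=
    component_eq_Icc ha hv ▸ mem_component_self v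
  have hsub := component_eq_Icc ha hv ▸ component_subset_Icc ha hv
  exact ⟨(hsub ⟨le_rfl, hv'.1.trans hv'.2⟩).1, hv'.1, hv'.2,
    (hsub ⟨hv'.1.trans hv'.2, le_rfl⟩).2⟩

theorem compRight_lt_or_lt_compLeft (ha : IsPF m n a) {x y : ℕ} (hx : x ∈ Set.Icc 1 n)
    (hy : y ∈ Set.Icc 1 n) (hxy : y ∉ component n a x) :
    compRight n a x < compLeft n a y ∨ compRight n a y < compLeft n a x := by
  by_contra! hmeet
  have hbx := compLeft_compRight_bounds ha hx
  have hby := compLeft_compRight_bounds ha hy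
  set z := max (compLeft n a x) (compLeft n a y)
  have hzx : z ∈ component n a x := by rw [component_eq_Icc ha hx]; constructor <;> omega
  have hzy : z ∈ component n a y := by rw [component_eq_Icc ha hy]; constructor <;> omega
  apply hxy
  rw [← component_eq_of_mem hzx, component_eq_of_mem hzy]
  exact mem_component_self y

end Component

noncomputable def reflect (n : ℕ) {m : ℕ} (a : Fin m → ℕ) (x : ℕ) : ℕ :=
  n + 1 - compRight n a x + (x - compLeft n a x)

section Reflect

variable {n m : ℕ} {a : Fin m → ℕ}

theorem Phi_apply (c : Fin m) : Phi m n a c = reflect n a (a c) := rfl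

theorem reflect_of_mem {v q : ℕ} (hq : q ∈ component n a v) :
    reflect n a q = n + 1 - compRight n a v + (q - compLeft n a v) := by
  rw [reflect, compLeft_eq_of_mem hq, compRight_eq_of_mem hq]

theorem mapsTo_reflect (ha : IsPF m n a) :
    Set.MapsTo (reflect n a) (Set.Icc 1 n) (Set.Icc 1 n) := fun x hx => by
  have := compLeft_compRight_bounds ha hx
  exact ⟨by unfold reflect; omega, by unfold reflect; omega⟩

theorem injOn_reflect (ha : IsPF m n a) : Set.InjOn (reflect n a) (Set.Icc 1 n) := by
  intro x hx y hy hxy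
  have hbx := compLeft_compRight_bounds ha hx
  have hby := compLeft_compRight_bounds ha hy
  by_cases hmem : y ∈ component n a x
  · have hy' := component_eq_Icc ha hx ▸ hmem
    rw [reflect_of_mem (mem_component_self x), reflect_of_mem hmem] at hxy
    have := hy'.1
    omega
  · have := compRight_lt_or_lt_compLeft ha hx hy hmem
    unfold reflect at hxy
    omega

theorem reflect_of_mem_Icc_spotOf (ha : IsPF m n a) {c : Fin m} {q : ℕ}
    (hq : q ∈ Set.Icc (a c) (spotOf n a c)) : reflect n a q = reflect n a (a c) + (q - a c) := by
  have hq_mem := mem_component_of_mem_Icc hq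
  have := hq.1
  have := compLeft_compRight_bounds ha (ha.1 c)
  rw [reflect_of_mem hq_mem, reflect_of_mem (mem_component_self (a c))]
  omega

end Reflect

section Phi

variable {n m : ℕ} {a : Fin m → ℕ}

theorem spotOf_Phi (ha : IsPF m n a) (c : Fin m) :
    spotOf n (Phi m n a) c = reflect n a (spotOf n a c) := by
  have hspots := spotsAux_map (injOn_reflect ha) (mapsTo_reflect ha) (occ := ∅) (by simp)
    (forall₂_ofFn_spotsAux_iff.2 fun c => ⟨ha.2 c, fun _ hq => reflect_of_mem_Icc_spotOf ha hq⟩)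
  rw [List.map_ofFn, Finset.image_empty] at hspots
  simp only [spotOf_eq_getElem, show Phi m n a = reflect n a ∘ a from rfl, hspots,
    List.getElem_map]

theorem spotOf_mem_Icc_one (ha : IsPF m n a) (c : Fin m) : spotOf n a c ∈ Set.Icc 1 n :=
  ⟨Nat.one_le_iff_ne_zero.2 (ha.2 c), (spotOf_mem_Icc (ha.2 c)).2⟩

theorem isPF_Phi (ha : IsPF m n a) : IsPF m n (Phi m n a) :=
  ⟨fun c => mapsTo_reflect ha (ha.1 c), fun c => by
    rw [spotOf_Phi ha]
    exact Nat.one_le_iff_ne_zero.1 (mapsTo_reflect ha (spotOf_mem_Icc_one ha c)).1⟩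

theorem spotOf_Phi_sub_Phi (ha : IsPF m n a) (c : Fin m) :
    spotOf n (Phi m n a) c - Phi m n a c = spotOf n a c - a c := by
  rw [spotOf_Phi ha, Phi_apply,
    reflect_of_mem_Icc_spotOf ha ⟨(spotOf_mem_Icc (ha.2 c)).1, le_rfl⟩]
  omega

theorem tpathStep_Phi (ha : IsPF m n a) {u w : ℕ} (huw : tpathStep n a u w) :
    tpathStep n (Phi m n a) (reflect n a u) (reflect n a w) := by
  obtain ⟨c, hu, hw⟩ := huw
  rw [Finset.mem_Icc] at hu hw
  have hs : spotOf n a c ∈ Set.Icc (a c) (spotOf n a c) := ⟨hu.1.trans hu.2, le_rfl⟩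
  refine ⟨c, ?_, ?_⟩ <;>
  · simp only [Finset.mem_Icc, Phi_apply, spotOf_Phi ha, reflect_of_mem_Icc_spotOf ha hs,
      reflect_of_mem_Icc_spotOf ha hu, reflect_of_mem_Icc_spotOf ha hw]
    omega

theorem Icc_Phi_spotOf_Phi_subset (ha : IsPF m n a) (c : Fin m) :
    Set.Icc (Phi m n a c) (spotOf n (Phi m n a) c) ⊆
      Set.Icc (n + 1 - compRight n a (a c)) (n + 1 - compLeft n a (a c)) := by
  have hs := mem_component_of_mem_Icc ⟨(spotOf_mem_Icc (ha.2 c)).1, le_rfl⟩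
  have hs_le := (component_eq_Icc ha (ha.1 c) ▸ hs).2
  have := compLeft_compRight_bounds ha (ha.1 c)
  rw [Phi_apply, spotOf_Phi ha, reflect_of_mem hs, reflect_of_mem (mem_component_self (a c))]
  exact Set.Icc_subset_Icc (by omega) (by omega)

theorem component_Phi (ha : IsPF m n a) (c : Fin m) :
    component n (Phi m n a) (Phi m n a c) =
      Set.Icc (n + 1 - compRight n a (a c)) (n + 1 - compLeft n a (a c)) := by
  have hc := compLeft_compRight_bounds ha (ha.1 c)
  have hPhi_c : Phi m n a c = n + 1 - compRight n a (a c) + (a c - compLeft n a (a c)) := rfl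
  apply Set.Subset.antisymm
  · refine component_subset_of_saturated (fun c' ⟨x, hx, hxS⟩ => ?_) ⟨by omega, by omega⟩
    have hsub := Icc_Phi_spotOf_Phi_subset ha c'
    by_cases hmem : a c' ∈ component n a (a c)
    · rwa [compLeft_eq_of_mem hmem, compRight_eq_of_mem hmem] at hsub
    · have := compRight_lt_or_lt_compLeft ha (ha.1 c) (ha.1 c') hmem
      have := compLeft_compRight_bounds ha (ha.1 c')
      have := hsub hx
      simp only [Set.mem_Icc] at this hxS
      omega
  · intro y ⟨hy₁, hy₂⟩
    set x := compLeft n a (a c) + (y - (n + 1 - compRight n a (a c)))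
    have hx : x ∈ component n a (a c) := by
      rw [component_eq_Icc ha (ha.1 c)]
      exact ⟨by omega, by omega⟩
    have hy : reflect n a x = y := by
      rw [reflect_of_mem hx]
      omega
    exact hy ▸ Relation.EqvGen.map (reflect n a) (fun _ _ => tpathStep_Phi ha) hx

theorem Phi_Phi (ha : IsPF m n a) : Phi m n (Phi m n a) = a := by
  funext c
  have hc := compLeft_compRight_bounds ha (ha.1 c)
  have hL : compLeft n (Phi m n a) (Phi m n a c) = n + 1 - compRight n a (a c) := by
    rw [compLeft, component_Phi ha, csInf_Icc (by omega)]
  have hR : compRight n (Phi m n a) (Phi m n a c) = n + 1 - compLeft n a (a c) := by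
    rw [compRight, component_Phi ha, csSup_Icc (by omega)]
  rw [Phi_apply (a := Phi m n a), reflect, hL, hR, Phi_apply, reflect]
  omega

end Phi

theorem phi_involution_general (m n : ℕ) (a : Fin m → ℕ) (ha : IsPF m n a) :
    IsPF m n (Phi m n a) ∧ Phi m n (Phi m n a) = a ∧
      ∀ c, spotOf n (Phi m n a) c - Phi m n a c = spotOf n a c - a c :=
  ⟨isPF_Phi ha, Phi_Phi ha, spotOf_Phi_sub_Phi ha⟩

/-- The parking reflection is an involution on `PF(m,n)` preserving the
traverse path length of every car. -/
theorem phi_involution (m n : ℕ) (hm : 1 ≤ m) (hmn : m ≤ n)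
    (a : Fin m → ℕ) (ha : IsPF m n a) :
    IsPF m n (Phi m n a) ∧ Phi m n (Phi m n a) = a ∧
      ∀ c, spotOf n (Phi m n a) c - Phi m n a c = spotOf n a c - a c :=
  phi_involution_general m n a ha
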